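/- arXiv:1707.01984 — 2 statements merged into one kernel-verified Lean document; each statement's English description precedes it below -/
import Mathlib

section
/- The generalized dynamical pruning with pruning function φ(T) = length(T) (the total length of the tree) does not satisfy the semigroup property: there exist a tree T and times s, t > 0 such that S_t(φ, S_s(φ, T)) ≠ S_{t+s}(φ, T). In particular, for a Y-shaped tree with two leaf edges of lengths a < b attached at a junction point x with a root edge of length c, the junction point x remains a leaf of S_t(φ,T) for all t with max{a,b} ≤ t ≤ a+b. -/
open scoped Classical

/-- Finite rooted (planted) binary trees with edge lengths: `nil` is the empty tree,
`leaf l` is a single stem of length `l` ending in a leaf, and `node l t₁ t₂` is a stem of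
length `l` ending in a junction carrying the subtrees `t₁` and `t₂`.
The Y-shaped tree of the statement is `node c (leaf a) (leaf b)`. -/
inductive PTree : Type
  | nil : PTree
  | leaf : ℝ → PTree
  | node : ℝ → PTree → PTree → PTree

namespace PTree

/-- The total length of a tree: the sum of its edge lengths. -/
noncomputable def lengthT : PTree → ℝ
  | .nil => 0
  | .leaf l => l
  | .node l a b => l + lengthT a + lengthT b

/-- Lengthen the stem of a (nonempty) tree by `l` (series reduction of a degree-2 point). -/
def graft (l : ℝ) : PTree → PTree
  | .nil => .nil
  | .leaf l' => .leaf (l + l')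
  | .node l' a b => .node (l + l') a b

/-- The generalized dynamical pruning `S_t(φ,·)` with `φ(T) = length(T)`:
a point `x` survives iff the total length of its descendant subtree `Δ_{x,T}` is `≥ t`. -/
noncomputable def pruneLength (t : ℝ) : PTree → PTree
  | .nil => .nil
  | .leaf l => if t ≤ l then .leaf (l - t) else .nil
  | .node l a b =>
      if t ≤ lengthT a + lengthT b then
        match pruneLength t a, pruneLength t b with
        | .nil, .nil => .leaf l
        | .nil, T => graft l T
        | T, .nil => graft l T
        | T₁, T₂ => .node l T₁ T₂
      else if t ≤ l + (lengthT a + lengthT b) then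
        .leaf (l + (lengthT a + lengthT b) - t)
      else .nil

/- Let `a < b`. Pruning the Y-shaped tree at any time `s ∈ [b, a + b]` removes both leaf edges
but keeps the junction, whose descendant subtree still has length `a + b ≥ s`; what is left is
the root edge alone. Pruning that single edge further by `t` shortens it by `t`, whereas pruning
the Y-shaped tree directly at `s + t ≤ a + b` still leaves the whole root edge. -/

theorem pruneLength_leaf_of_le {l t : ℝ} (h : t ≤ l) : pruneLength t (leaf l) = leaf (l - t) := by
  simp [pruneLength, h]

theorem pruneLength_node_leaf_leaf {a b c t : ℝ} (hat : a < t) (hbt : b ≤ t) (ht : t ≤ a + b) :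
    pruneLength t (node c (leaf a) (leaf b)) = leaf c := by
  simp only [pruneLength, lengthT, if_pos ht, if_neg (not_le.2 hat)]
  rcases hbt.lt_or_eq with hbt | rfl
  · rw [if_neg (not_le.2 hbt)]
  · simp [graft]

theorem pruneLength_pruneLength_node_leaf_leaf_ne {a b c s t : ℝ} (hab : a < b) (hbs : b ≤ s)
    (hst : t + s ≤ a + b) (ht : 0 < t) (htc : t ≤ c) :
    pruneLength t (pruneLength s (node c (leaf a) (leaf b))) ≠
      pruneLength (t + s) (node c (leaf a) (leaf b)) := by
  rw [pruneLength_node_leaf_leaf (by linarith) hbs (by linarith),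
    pruneLength_node_leaf_leaf (by linarith) (by linarith) hst, pruneLength_leaf_of_le htc]
  intro h
  injection h
  linarith

/-- Pruning by total tree length does not satisfy the semigroup
property: there are a tree `T` and times `s, t > 0` with
`S_t(φ, S_s(φ,T)) ≠ S_{t+s}(φ,T)`.  In particular, for a Y-shaped tree with leaf edges of
lengths `a < b` attached at the junction `x` on top of a root edge of length `c`, the
junction remains a leaf of `S_t(φ,T)` (the pruned tree is a single edge of length `c`
with leaf `x`) for all `t` with `max{a,b} ≤ t ≤ a+b`. -/
theorem pruneLength_not_semigroup :
    (∃ (T : PTree) (s t : ℝ), 0 < s ∧ 0 < t ∧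
        pruneLength t (pruneLength s T) ≠ pruneLength (t + s) T)
    ∧ (∀ a b c t : ℝ, 0 < a → a < b → 0 < c → max a b ≤ t → t ≤ a + b →
        pruneLength t (node c (leaf a) (leaf b)) = leaf c) := by
  refine ⟨⟨node 1 (leaf 1) (leaf 2), 2, 1, two_pos, one_pos,
    pruneLength_pruneLength_node_leaf_leaf_ne (by norm_num) le_rfl (by norm_num) one_pos le_rfl⟩, ?_⟩
  intro a b c t _ hab _ hmax ht
  have hbt : b ≤ t := (le_max_right a b).trans hmax
  exact pruneLength_node_leaf_leaf (hab.trans_le hbt) hbt ht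

end PTree
end

section
/- If T is an exponential critical binary Galton-Watson tree with edge-length parameter λ, then the total length of T has probability density function ℓ(x) = (1/x) e^{−λx} I₁(λx) for x > 0, where I₁ is the modified Bessel function of the first kind of order 1. -/
open Real MeasureTheory ProbabilityTheory
open scoped ENNReal

/-- Modified Bessel function of the first kind of order 1. -/
noncomputable def besselI1 (z : ℝ) : ℝ :=
  ∑' n : ℕ, (z / 2) ^ (2 * n + 1) / ((Nat.factorial n : ℝ) * Nat.factorial (n + 1))

/-- The claimed total-length density `ℓ(x) = (1/x) e^{-λx} I₁(λx)` for `x > 0`. -/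
noncomputable def ellDensity (lam x : ℝ) : ℝ :=
  if 0 < x then (1 / x) * Real.exp (-lam * x) * besselI1 (lam * x) else 0

/-- Combinatorial shapes of finite (planted) binary trees. -/
inductive Sh : Type
  | leaf : Sh
  | node : Sh → Sh → Sh

def Sh.enc : Sh → ℕ
  | .leaf => 0
  | .node a b => Nat.pair a.enc b.enc + 1

theorem Sh.enc_inj : Function.Injective Sh.enc := by
  intro a
  induction a with
  | leaf =>
    intro b h
    cases b with
    | leaf => rfl
    | node c d => simp [Sh.enc] at h
  | node c d ihc ihd =>
    intro b h
    cases b with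
    | leaf => simp [Sh.enc] at h
    | node e f =>
      simp only [Sh.enc, Nat.add_right_cancel_iff] at h
      have h' := Nat.pair_eq_pair.mp h
      rw [ihc h'.1, ihd h'.2]

instance : Countable Sh := ⟨Sh.enc, Sh.enc_inj⟩

namespace Sh

/-- Number of edges of a planted binary tree shape: a shape with `n+1` leaves has
`2n+1` edges (equivalently, `2n+1` vertices besides the root, one coin flip each). -/
def numEdges : Sh → ℕ
  | .leaf => 1
  | .node a b => 1 + a.numEdges + b.numEdges

end Sh

/-- The law of the total length of an exponential critical binary Galton-Watson tree
`GW(λ)`: the shape `σ` occurs with probability `(1/2)^{numEdges σ}` (critical binary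
branching: each vertex has 0 or 2 offspring with probability 1/2 each), and conditionally
on the shape the total length is the sum of `numEdges σ` i.i.d. Exp(λ) lengths, i.e. a
Gamma(numEdges σ, λ) random variable. -/
noncomputable def gwLengthLaw (lam : ℝ) : Measure ℝ :=
  Measure.sum fun σ : Sh =>
    ((1 : ℝ≥0∞) / 2) ^ σ.numEdges • gammaMeasure (σ.numEdges : ℝ) lam

/-! The law of the total length is the mixture over shapes of Gamma(2n+1, λ) laws, and there are
`catalan n` shapes with `2n+1` edges, each of weight `2^{-(2n+1)}`. Summing the Gamma densities
termwise, `catalan n / (2n)! = 1 / (n! (n+1)!)` turns the series into `x⁻¹ e^{-λx} I₁(λx)`. -/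

open Nat

namespace Sh

def toBinaryTree : Sh → BinaryTree Unit
  | .leaf => .nil
  | .node a b => .node () a.toBinaryTree b.toBinaryTree

def ofBinaryTree : BinaryTree Unit → Sh
  | .nil => .leaf
  | .node _ a b => .node (ofBinaryTree a) (ofBinaryTree b)

def equivBinaryTree : Sh ≃ BinaryTree Unit where
  toFun := toBinaryTree
  invFun := ofBinaryTree
  left_inv s := by induction s <;> simp [toBinaryTree, ofBinaryTree, *]
  right_inv t := by induction t <;> simp [toBinaryTree, ofBinaryTree, *]

lemma numEdges_eq_two_mul_numNodes_add_one (s : Sh) :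
    s.numEdges = 2 * s.toBinaryTree.numNodes + 1 := by
  induction s with
  | leaf => rfl
  | node a b iha ihb =>
    simp only [numEdges, toBinaryTree, BinaryTree.numNodes, iha, ihb]
    ring

end Sh

lemma BinaryTree.tsum_numNodes (g : ℕ → ℝ≥0∞) :
    ∑' t : BinaryTree Unit, g t.numNodes = ∑' n : ℕ, (catalan n : ℝ≥0∞) * g n := by
  rw [← (Equiv.sigmaFiberEquiv BinaryTree.numNodes).tsum_eq, ENNReal.tsum_sigma']
  refine tsum_congr fun n => ?_
  calc ∑' t : {t : BinaryTree Unit // t.numNodes = n}, g (t : BinaryTree Unit).numNodes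
      = ∑' _ : (treesOfNumNodesEq n : Set (BinaryTree Unit)), g n := by
        rw [coe_treesOfNumNodesEq]
        exact tsum_congr fun t => congrArg g t.2
    _ = (catalan n : ℝ≥0∞) * g n := by
        rw [Finset.tsum_subtype' _ fun _ => g n, Finset.sum_const,
          treesOfNumNodesEq_card_eq_catalan, nsmul_eq_mul]

lemma Sh.tsum_numEdges (g : ℕ → ℝ≥0∞) :
    ∑' s : Sh, g s.numEdges = ∑' n : ℕ, (catalan n : ℝ≥0∞) * g (2 * n + 1) := by
  rw [← BinaryTree.tsum_numNodes, ← Sh.equivBinaryTree.tsum_eq]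
  exact tsum_congr fun s => congrArg g s.numEdges_eq_two_mul_numNodes_add_one

lemma catalan_mul_factorial_mul_factorial_succ (n : ℕ) :
    catalan n * (n ! * (n + 1)!) = (2 * n)! := by
  calc catalan n * (n ! * (n + 1)!) = (n + 1) * catalan n * n ! * n ! := by
        rw [factorial_succ]; ring
    _ = (2 * n).choose n * n ! * (2 * n - n)! := by
        rw [succ_mul_catalan_eq_centralBinom, centralBinom_eq_two_mul_choose,
          show 2 * n - n = n by omega]
    _ = (2 * n)! := choose_mul_factorial_mul_factorial (by omega)

lemma summable_besselI1_series (z : ℝ) :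
    Summable fun n : ℕ => (z / 2) ^ (2 * n + 1) / ((n ! : ℝ) * (n + 1)!) := by
  refine Summable.of_norm_bounded
    ((Real.summable_pow_div_factorial ((z / 2) ^ 2)).mul_left |z / 2|) fun n => ?_
  have hfac : (1 : ℝ) ≤ (n + 1)! := Nat.one_le_cast.mpr (factorial_pos _)
  calc ‖(z / 2) ^ (2 * n + 1) / ((n ! : ℝ) * (n + 1)!)‖
      = |z / 2| * (((z / 2) ^ 2) ^ n / n !) / (n + 1)! := by
        rw [norm_div, norm_mul, norm_pow, RCLike.norm_natCast, RCLike.norm_natCast,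
          Real.norm_eq_abs, pow_succ, pow_mul, sq_abs]
        ring
    _ ≤ |z / 2| * (((z / 2) ^ 2) ^ n / n !) := div_le_self (by positivity) hfac

lemma gammaPDFReal_natCast_succ {x : ℝ} (hx : 0 ≤ x) (n : ℕ) (r : ℝ) :
    gammaPDFReal ((n + 1 : ℕ) : ℝ) r x = r ^ (n + 1) / n ! * x ^ n * exp (-(r * x)) := by
  rw [gammaPDFReal, if_pos hx, Real.rpow_natCast, Nat.cast_succ, Real.Gamma_nat_eq_factorial,
    add_sub_cancel_right, Real.rpow_natCast]

lemma catalan_mul_gammaPDFReal_two_mul_add_one {x : ℝ} (hx : 0 < x) (n : ℕ) (r : ℝ) :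
    catalan n * ((1 / 2) ^ (2 * n + 1) * gammaPDFReal ((2 * n + 1 : ℕ) : ℝ) r x)
      = 1 / x * exp (-r * x) * ((r * x / 2) ^ (2 * n + 1) / ((n ! : ℝ) * (n + 1)!)) := by
  have hcat : (catalan n : ℝ) * (n ! * (n + 1)!) = (2 * n)! := by
    exact_mod_cast catalan_mul_factorial_mul_factorial_succ n
  have hC : (catalan n : ℝ) ≠ 0 := by
    exact_mod_cast
      left_ne_zero_of_mul (catalan_mul_factorial_mul_factorial_succ n ▸ factorial_ne_zero _)
  rw [gammaPDFReal_natCast_succ hx.le, ← hcat]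
  field_simp
  ring

noncomputable def gwLengthDensity (lam x : ℝ) : ℝ≥0∞ :=
  ∑' σ : Sh, (1 / 2 : ℝ≥0∞) ^ σ.numEdges * gammaPDF σ.numEdges lam x

lemma gwLengthLaw_eq_withDensity (lam : ℝ) :
    gwLengthLaw lam = volume.withDensity (gwLengthDensity lam) := by
  have hmeas (σ : Sh) :
      Measurable fun x => (1 / 2 : ℝ≥0∞) ^ σ.numEdges * gammaPDF σ.numEdges lam x :=
    (measurable_gammaPDFReal _ lam).ennreal_ofReal.const_mul _
  have hdens : gwLengthDensity lam
      = ∑' σ : Sh, fun x => (1 / 2 : ℝ≥0∞) ^ σ.numEdges * gammaPDF σ.numEdges lam x :=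
    funext fun x => by rw [tsum_apply (Pi.summable.mpr fun _ => ENNReal.summable)]; rfl
  rw [hdens, withDensity_tsum hmeas, gwLengthLaw]
  congr 1
  funext σ
  have hg : Measurable (gammaPDF σ.numEdges lam) :=
    (measurable_gammaPDFReal _ lam).ennreal_ofReal
  rw [gammaMeasure, ← withDensity_smul _ hg]
  rfl

lemma gwLengthDensity_of_neg (lam : ℝ) {x : ℝ} (hx : x < 0) : gwLengthDensity lam x = 0 := by
  simp [gwLengthDensity, gammaPDF_of_neg hx]

lemma gwLengthDensity_of_pos {lam x : ℝ} (hlam : 0 < lam) (hx : 0 < x) :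
    gwLengthDensity lam x = ENNReal.ofReal (ellDensity lam x) := by
  have hterm (n : ℕ) :
      (catalan n : ℝ≥0∞) * ((1 / 2) ^ (2 * n + 1) * gammaPDF ((2 * n + 1 : ℕ) : ℝ) lam x)
        = ENNReal.ofReal
            (catalan n * ((1 / 2) ^ (2 * n + 1) * gammaPDFReal ((2 * n + 1 : ℕ) : ℝ) lam x)) := by
    rw [gammaPDF, ENNReal.ofReal_mul (by positivity), ENNReal.ofReal_mul (by positivity),
      ENNReal.ofReal_natCast, ENNReal.ofReal_pow (by norm_num), ENNReal.ofReal_div_of_pos two_pos,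
      ENNReal.ofReal_one, ENNReal.ofReal_ofNat]
  rw [gwLengthDensity, Sh.tsum_numEdges (fun k => (1 / 2 : ℝ≥0∞) ^ k * gammaPDF k lam x),
    tsum_congr hterm]
  simp_rw [catalan_mul_gammaPDFReal_two_mul_add_one hx]
  rw [← ENNReal.ofReal_tsum_of_nonneg (fun n => by positivity)
      ((summable_besselI1_series _).mul_left _), tsum_mul_left, ellDensity, if_pos hx, besselI1]

/-- If `T` is an exponential critical binary Galton-Watson tree with
edge-length parameter `λ > 0`, then the total length of `T` has probability density
function `ℓ(x) = (1/x) e^{-λx} I₁(λx)`, `x > 0`, with respect to Lebesgue measure. -/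
theorem gw_total_length_density (lam : ℝ) (hlam : 0 < lam) :
    gwLengthLaw lam = volume.withDensity fun x => ENNReal.ofReal (ellDensity lam x) := by
  rw [gwLengthLaw_eq_withDensity]
  refine withDensity_congr_ae ?_
  filter_upwards [Measure.ae_ne volume 0] with x hx
  rcases hx.lt_or_gt with hneg | hpos
  · simp [gwLengthDensity_of_neg lam hneg, ellDensity, hneg.not_gt]
  · exact gwLengthDensity_of_pos hlam hpos
end
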